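/- Let λ be a nonnegative measure on ℝ that is absolutely continuous with density G (with G bounded, nonnegative, right-continuous), and let ν be a probability measure on ℝ. If λ = λ ∗ ν (convolution), then for every a in the support of ν and every x ∈ ℝ, G(x + a) = G(x). -/

import Mathlib

/-!
Averaging `G` over windows turns `λ = λ ∗ ν` into the statement that `W z = ∫ u in z..z + t, G u`
is a bounded, uniformly continuous, `ν`-harmonic function: `W z = ∫ W (z - y) dν(y)`.
For such an `h` and `a` in the support of `ν`, `k = h - h (· - a)` is harmonic too. If
`m = sup k > 0`, harmonicity carries a near-maximum of `k` at `x` to a near-maximum at `x - y`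
for some `y` close to `a`, where `h` has dropped by about `m`; iterating gives points where `h`
has dropped by `n m / 2` for every `n`, contradicting boundedness. Hence every window integral is
`a`-periodic, and so is `G = lim_{t → 0+} t⁻¹ ∫ u in z..z + t, G u` by right continuity.
-/

open MeasureTheory Filter Set Topology
open scoped NNReal

lemma measurable_of_continuousWithinAt_Ici {β : Type*} [TopologicalSpace β]
    [TopologicalSpace.PseudoMetrizableSpace β] [MeasurableSpace β] [BorelSpace β] {f : ℝ → β}
    (hf : ∀ x, ContinuousWithinAt f (Ici x) x) : Measurable f := by
  -- `f` is the pointwise limit of `f` composed with rounding up to the grid `ℤ / (n + 1)`.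
  set r : ℕ → ℝ → ℝ := fun n x => ⌈x * (n + 1)⌉ / (n + 1)
  refine measurable_of_tendsto_metrizable (f := fun n x => f (r n x)) (fun n => ?_)
    (tendsto_pi_nhds.2 fun x => (hf x).tendsto.comp ?_)
  · have hceil : Measurable fun x : ℝ => ⌈x * (n + 1)⌉ :=
      Monotone.measurable fun a b hab => Int.ceil_mono (by gcongr)
    exact (measurable_from_top (f := fun z : ℤ => f (z / (n + 1)))).comp hceil
  · have hx_le : ∀ n : ℕ, x ≤ r n x := fun n => by
      rw [le_div_iff₀ (by positivity)]; exact Int.le_ceil _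
    have hle_x : ∀ n : ℕ, r n x ≤ x + 1 / (n + 1) := fun n => by
      rw [div_le_iff₀ (by positivity), add_mul, one_div_mul_cancel (by positivity)]
      exact (Int.ceil_lt_add_one _).le
    refine tendsto_nhdsWithin_of_tendsto_nhds_of_eventually_within _ ?_
      (Eventually.of_forall hx_le)
    refine tendsto_of_tendsto_of_tendsto_of_le_of_le tendsto_const_nhds ?_ hx_le hle_x
    simpa using (tendsto_const_nhds (x := x)).add
      (tendsto_one_div_add_atTop_nhds_zero_nat (𝕜 := ℝ))

lemma integrable_comp_sub_of_bounded {ν : Measure ℝ} [IsFiniteMeasure ν] {h : ℝ → ℝ} {C : ℝ}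
    (hc : Continuous h) (hb : ∀ x, |h x| ≤ C) (x : ℝ) : Integrable (fun y => h (x - y)) ν :=
  .of_bound (by fun_prop) C (.of_forall fun y => hb (x - y))

section ChoquetDeny

variable {ν : Measure ℝ} [IsProbabilityMeasure ν]

lemma le_sub_mul_measureReal_of_le_on {k : ℝ → ℝ} {m c x : ℝ} {B : Set ℝ} (hB : MeasurableSet B)
    (hk : k x = ∫ y, k (x - y) ∂ν) (hki : Integrable (fun y => k (x - y)) ν)
    (hkm : ∀ z, k z ≤ m) (hkB : ∀ y ∈ B, k (x - y) ≤ m - c) :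
    k x ≤ m - c * ν.real B := by
  calc k x = ∫ y, k (x - y) ∂ν := hk
    _ ≤ ∫ y, (m - B.indicator (fun _ => c) y) ∂ν := by
        refine integral_mono hki ((integrable_const m).sub
          ((integrable_const c).indicator hB)) fun y => ?_
        by_cases hy : y ∈ B
        · simpa [hy] using hkB y hy
        · simpa [hy] using hkm (x - y)
    _ = m - c * ν.real B := by
        rw [integral_sub (integrable_const m) ((integrable_const c).indicator hB),
          integral_indicator_const c hB]
        simp [mul_comm]

lemma exists_mem_near_max_of_near_max {k : ℝ → ℝ} {m δ x : ℝ} {B : Set ℝ} (hB : MeasurableSet B)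
    (hBpos : 0 < ν.real B) (hk : k x = ∫ y, k (x - y) ∂ν)
    (hki : Integrable (fun y => k (x - y)) ν) (hkm : ∀ z, k z ≤ m) (hx : m - δ < k x) :
    ∃ y ∈ B, m - δ / ν.real B < k (x - y) := by
  by_contra! hB_le
  have := le_sub_mul_measureReal_of_le_on hB hk hki hkm hB_le
  rw [div_mul_cancel₀ δ hBpos.ne'] at this
  linarith

variable {h : ℝ → ℝ} {C : ℝ}

lemma sub_comp_sub_eq_integral (hc : Continuous h) (hb : ∀ x, |h x| ≤ C)
    (hh : ∀ x, h x = ∫ y, h (x - y) ∂ν) (a x : ℝ) :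
    h x - h (x - a) = ∫ y, (h (x - y) - h (x - y - a)) ∂ν := by
  have hi := integrable_comp_sub_of_bounded (ν := ν) hc hb
  have hia : Integrable (fun y => h (x - y - a)) ν := by
    simpa only [sub_right_comm] using hi (x - a)
  rw [integral_sub (hi x) hia, hh x, hh (x - a)]
  simp only [sub_right_comm]

lemma exists_nat_mul_le_sub_of_near_max (hc : Continuous h) (hb : ∀ x, |h x| ≤ C)
    (hh : ∀ x, h x = ∫ y, h (x - y) ∂ν) {a m ω : ℝ} (hm : ∀ x, h x - h (x - a) ≤ m)
    {B : Set ℝ} (hB : MeasurableSet B) (hBpos : 0 < ν.real B)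
    (hω : ∀ z, ∀ y ∈ B, h (z - y) ≤ h (z - a) + ω) (n : ℕ) {η : ℝ} (hη : 0 < η) :
    ∃ δ > 0, ∀ x, m - δ < h x - h (x - a) → ∃ z, n * (m - η - ω) ≤ h x - h z := by
  induction n with
  | zero => exact ⟨1, one_pos, fun x _ => ⟨x, by simp⟩⟩
  | succ n ih =>
    obtain ⟨δ, hδ, hδx⟩ := ih
    refine ⟨min η (δ * ν.real B), by positivity, fun x hx => ?_⟩
    have hkc : Continuous fun x => h x - h (x - a) := by fun_prop
    have hkb : ∀ x, |h x - h (x - a)| ≤ 2 * C := fun x =>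
      (abs_sub _ _).trans (by linarith [hb x, hb (x - a)])
    obtain ⟨y, hyB, hy⟩ := exists_mem_near_max_of_near_max hB hBpos
      (sub_comp_sub_eq_integral hc hb hh a x)
      (integrable_comp_sub_of_bounded hkc hkb x) hm hx
    have hδy : m - δ < h (x - y) - h (x - y - a) := by
      have : min η (δ * ν.real B) / ν.real B ≤ δ := by
        rw [div_le_iff₀ hBpos]; exact min_le_right _ _
      linarith
    obtain ⟨z, hz⟩ := hδx (x - y) hδy
    refine ⟨z, ?_⟩
    push_cast
    linarith [hω x y hyB, min_le_left η (δ * ν.real B)]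

lemma le_comp_sub_of_mem_support (hu : UniformContinuous h) (hb : ∀ x, |h x| ≤ C)
    (hh : ∀ x, h x = ∫ y, h (x - y) ∂ν) {a : ℝ} (ha : ∀ ε > 0, 0 < ν (Ioo (a - ε) (a + ε)))
    (x : ℝ) : h x ≤ h (x - a) := by
  have hbdd : BddAbove (range fun x => h x - h (x - a)) :=
    ⟨2 * C, by rintro _ ⟨x, rfl⟩; linarith [abs_le.1 (hb x), abs_le.1 (hb (x - a))]⟩
  set m := ⨆ x, (h x - h (x - a))
  have hm : ∀ x, h x - h (x - a) ≤ m := le_ciSup hbdd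
  suffices m ≤ 0 by linarith [hm x]
  by_contra! hm0
  obtain ⟨ρ, hρ, hρh⟩ := Metric.uniformContinuous_iff.1 hu (m / 4) (by positivity)
  have hBpos : 0 < ν.real (Ioo (a - ρ) (a + ρ)) :=
    ENNReal.toReal_pos (ha ρ hρ).ne' (measure_ne_top _ _)
  have hω : ∀ z, ∀ y ∈ Ioo (a - ρ) (a + ρ), h (z - y) ≤ h (z - a) + m / 4 := by
    intro z y hy
    have hdist : dist (z - y) (z - a) < ρ := by
      rw [Real.dist_eq, abs_lt]; constructor <;> linarith [hy.1, hy.2]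
    linarith [(abs_lt.1 (hρh hdist)).2]
  obtain ⟨n, hn⟩ := exists_nat_gt (4 * C / m)
  obtain ⟨δ, hδ, hδx⟩ := exists_nat_mul_le_sub_of_near_max hu.continuous hb hh hm
    measurableSet_Ioo hBpos hω n (η := m / 4) (by positivity)
  obtain ⟨x₀, hx₀⟩ := exists_lt_of_lt_ciSup (sub_lt_self m hδ)
  obtain ⟨z, hz⟩ := hδx x₀ hx₀
  rw [div_lt_iff₀ hm0] at hn
  linarith [abs_le.1 (hb x₀), abs_le.1 (hb z)]

theorem comp_sub_eq_of_mem_support (hu : UniformContinuous h) (hb : ∀ x, |h x| ≤ C)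
    (hh : ∀ x, h x = ∫ y, h (x - y) ∂ν) {a : ℝ} (ha : ∀ ε > 0, 0 < ν (Ioo (a - ε) (a + ε)))
    (x : ℝ) : h (x - a) = h x := by
  refine le_antisymm ?_ (le_comp_sub_of_mem_support hu hb hh ha x)
  have hneg := le_comp_sub_of_mem_support (h := fun x => -h x) hu.neg (by simpa using hb)
    (fun x => by rw [integral_neg, hh x]) ha x
  linarith

end ChoquetDeny

lemma conv_apply_eq_lintegral {M : Type*} [AddMonoid M] [MeasurableSpace M] [MeasurableAdd₂ M]
    (μ ν : Measure M) [SFinite μ] [SFinite ν] {s : Set M} (hs : MeasurableSet s) :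
    (μ ∗ ν) s = ∫⁻ y, μ ((· + y) ⁻¹' s) ∂ν := by
  rw [Measure.conv, Measure.map_apply measurable_add hs,
    Measure.prod_apply_symm (measurable_add hs)]
  rfl

lemma withDensity_ofReal_Ioc {f : ℝ → ℝ} {a b : ℝ} (hab : a ≤ b)
    (hf : IntervalIntegrable f volume a b) (hf0 : ∀ x, 0 ≤ f x) :
    volume.withDensity (fun x => ENNReal.ofReal (f x)) (Ioc a b)
      = ENNReal.ofReal (∫ x in a..b, f x) := by
  rw [withDensity_apply _ measurableSet_Ioc, intervalIntegral.integral_of_le hab,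
    ofReal_integral_eq_lintegral_ofReal ((intervalIntegrable_iff_integrableOn_Ioc_of_le hab).1 hf)
      (.of_forall hf0)]

lemma tendsto_intervalIntegral_div_of_continuousWithinAt {E : Type*} [NormedAddCommGroup E]
    [NormedSpace ℝ E] [CompleteSpace E] {f : ℝ → E} {z : ℝ}
    (hmeas : StronglyMeasurableAtFilter f (𝓝[>] z))
    (hz : ContinuousWithinAt f (Ici z) z) :
    Tendsto (fun t => t⁻¹ • ∫ u in z..z + t, f u) (𝓝[>] 0) (𝓝 (f z)) := by
  have hderiv : HasDerivWithinAt (fun u => ∫ x in z..u, f x) (f z) (Ici z) z :=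
    intervalIntegral.integral_hasDerivWithinAt_right .refl hmeas
      (hz.mono Ioi_subset_Ici_self)
  have hshift : Tendsto (fun t => z + t) (𝓝[>] 0) (𝓝[>] z) :=
    tendsto_nhdsWithin_of_tendsto_nhds_of_eventually_within _
      (((continuous_const_add z).tendsto' 0 z (add_zero z)).mono_left nhdsWithin_le_nhds)
      (eventually_nhdsWithin_of_forall fun t (ht : 0 < t) => by simpa using ht)
  have hslope := (hasDerivWithinAt_iff_tendsto_slope.1 hderiv).comp
    (by simpa only [Ici_sdiff_left] using hshift)
  refine hslope.congr fun t => ?_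
  simp [slope_def_module]

lemma intervalIntegrable_of_norm_le {E : Type*} [NormedAddCommGroup E] {f : ℝ → E} {C : ℝ}
    (hf : AEStronglyMeasurable f volume) (hC : ∀ x, ‖f x‖ ≤ C) (a b : ℝ) :
    IntervalIntegrable f volume a b :=
  (intervalIntegrable_const (c := C)).mono_fun hf.restrict
    (.of_forall fun x => (hC x).trans (le_abs_self C))

lemma lipschitzWith_intervalIntegral {E : Type*} [NormedAddCommGroup E] [NormedSpace ℝ E]
    {f : ℝ → E} {C : ℝ≥0} (hf : AEStronglyMeasurable f volume) (hC : ∀ x, ‖f x‖ ≤ C) (a : ℝ) :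
    LipschitzWith C fun x => ∫ u in a..x, f u := by
  refine .of_dist_le_mul fun x y => ?_
  rw [dist_eq_norm, intervalIntegral.integral_interval_sub_left
    (intervalIntegrable_of_norm_le hf hC a x) (intervalIntegrable_of_norm_le hf hC a y),
    Real.dist_eq]
  exact intervalIntegral.norm_integral_le_of_norm_le_const fun u _ => hC u

section BoundedDensity

variable {G : ℝ → ℝ} {C : ℝ≥0}

lemma uniformContinuous_intervalIntegral_add (hG : AEStronglyMeasurable G volume)
    (hC : ∀ x, ‖G x‖ ≤ C) (t : ℝ) : UniformContinuous fun z => ∫ u in z..z + t, G u := by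
  have hF := (lipschitzWith_intervalIntegral hG hC 0).uniformContinuous
  have hsub : (fun z => ∫ u in z..z + t, G u)
      = fun z => (∫ u in 0..z + t, G u) - ∫ u in 0..z, G u := by
    ext z
    rw [intervalIntegral.integral_interval_sub_left (intervalIntegrable_of_norm_le hG hC 0 _)
      (intervalIntegrable_of_norm_le hG hC 0 _)]
  rw [hsub]
  exact (hF.comp (uniformContinuous_id.add uniformContinuous_const)).sub hF

lemma abs_intervalIntegral_add_le (hC : ∀ x, ‖G x‖ ≤ C) (z t : ℝ) :
    |∫ u in z..z + t, G u| ≤ C * |t| := by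
  simpa using intervalIntegral.norm_integral_le_of_norm_le_const (a := z) (b := z + t)
    fun u _ => hC u

lemma intervalIntegral_eq_integral_of_withDensity_eq_conv {ν : Measure ℝ}
    [IsFiniteMeasure ν] (hG : Measurable G) (hG0 : ∀ x, 0 ≤ G x) (hC : ∀ x, ‖G x‖ ≤ C)
    (hconv : volume.withDensity (fun x => ENNReal.ofReal (G x))
      = volume.withDensity (fun x => ENNReal.ofReal (G x)) ∗ ν) {t : ℝ} (ht : 0 ≤ t) (z : ℝ) :
    ∫ u in z..z + t, G u = ∫ y, (∫ u in z - y..z - y + t, G u) ∂ν := by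
  have hW0 : ∀ w, 0 ≤ ∫ u in w..w + t, G u := fun w =>
    intervalIntegral.integral_nonneg (by linarith) fun u _ => hG0 u
  have hmass : ∀ w, volume.withDensity (fun x => ENNReal.ofReal (G x)) (Ioc w (w + t))
      = ENNReal.ofReal (∫ u in w..w + t, G u) := fun w =>
    withDensity_ofReal_Ioc (by linarith)
      (intervalIntegrable_of_norm_le hG.aestronglyMeasurable hC _ _) hG0
  have hint := integrable_comp_sub_of_bounded (ν := ν)
    (uniformContinuous_intervalIntegral_add hG.aestronglyMeasurable hC t).continuous
    (abs_intervalIntegral_add_le hC · t) z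
  refine (ENNReal.ofReal_eq_ofReal_iff (hW0 z) (integral_nonneg fun y => hW0 _)).1 ?_
  rw [ofReal_integral_eq_lintegral_ofReal hint (.of_forall fun y => hW0 _), ← hmass, hconv,
    conv_apply_eq_lintegral _ _ measurableSet_Ioc]
  refine lintegral_congr fun y => ?_
  rw [preimage_add_const_Ioc, add_sub_right_comm, hmass]

end BoundedDensity

/-- Choquet–Deny lemma. If the measure `λ` with bounded, nonnegative,
right-continuous density `G` w.r.t. Lebesgue measure satisfies `λ = λ ∗ ν` for a
probability measure `ν`, then `G` is periodic with every period in the support of `ν`. -/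
theorem stmt2 (ν : Measure ℝ) [IsProbabilityMeasure ν] (G : ℝ → ℝ)
    (hGrc : ∀ x, ContinuousWithinAt G (Ici x) x)
    (hGnn : ∀ x, 0 ≤ G x)
    (hGbd : ∃ C, ∀ x, G x ≤ C)
    (hconv : (volume.withDensity fun x => ENNReal.ofReal (G x))
        = Measure.conv (volume.withDensity fun x => ENNReal.ofReal (G x)) ν) :
    ∀ a, (∀ ε > 0, 0 < ν (Ioo (a - ε) (a + ε))) → ∀ x, G (x + a) = G x := by
  intro a ha x
  obtain ⟨C, hC⟩ := hGbd
  have hG : Measurable G := measurable_of_continuousWithinAt_Ici hGrc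
  have hGC : ∀ x, ‖G x‖ ≤ C.toNNReal := fun x => by
    rw [Real.norm_of_nonneg (hGnn x)]
    exact (hC x).trans (Real.le_coe_toNNReal C)
  have hperiodic : ∀ t > 0, ∫ u in x + a..x + a + t, G u = ∫ u in x..x + t, G u := fun t ht =>
    by simpa using (comp_sub_eq_of_mem_support
      (uniformContinuous_intervalIntegral_add hG.aestronglyMeasurable hGC t)
      (abs_intervalIntegral_add_le hGC · t)
      (intervalIntegral_eq_integral_of_withDensity_eq_conv hG hGnn hGC hconv ht.le) ha
      (x + a)).symm
  have hlim := fun y => tendsto_intervalIntegral_div_of_continuousWithinAt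
    hG.stronglyMeasurable.stronglyMeasurableAtFilter (hGrc y)
  refine tendsto_nhds_unique (hlim (x + a)) ((hlim x).congr' ?_)
  filter_upwards [self_mem_nhdsWithin] with t ht
  rw [hperiodic t ht]
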